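/- arXiv:math/0602258 — 2 statements merged into one kernel-verified Lean document; each statement's English description precedes it below -/
import Mathlib

section
/- A vector c = (c_1,c_2,c_3,c_4,c_5) ∈ ℤ⁵ with c_5 = 1 and c_1 = 0 is cohomology-free if and only if c = (0,1,2,1,1). -/
/-!
A subset of the 7-cycle is a circular interval exactly when it has at most one cyclic
descent `i ∈ S`, `i + 1 ∉ S`; this is a finite check. Since `l₅ + l₇ = 0`, the set `N_{±c}(m)`
is never everything once `c₅ = 1`. At the test points `m = (-1,-1)`, `(1,1)`, `(-1,0)` (for `c`,
`-c`, `c` respectively) a descent at `6`, `7`, `1` is already forced, and excluding a second one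
pins down `c₄ = 1`, `c₃ = 2`, `c₂ = 1`. Conversely, for `c = (0,1,2,1,1)` any two descents give
contradictory linear inequalities on `m`.

Indices are 0-based in the code: `i : Fin 7` stands for `lᵢ₊₁`.
-/

/-- The primitive ray generators `l₁,…,l₇` of the fan, in counterclockwise order,
acting on `ℤ²` by the dot product. -/
def rayForm : Fin 7 → ℤ × ℤ :=
  ![(1, -1), (2, -1), (3, -1), (1, 0), (0, 1), (-1, 2), (0, -1)]

/-- Extend `c ∈ ℤ⁵` to seven coefficients by `c₆ = c₇ = 0`. -/
def cExt (c : Fin 5 → ℤ) : Fin 7 → ℤ :=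
  fun i => if h : (i : ℕ) < 5 then c ⟨i, h⟩ else 0

/-- `N_c(m) = {i : l_i(m) + c_i < 0}`. -/
def Nset (c : Fin 5 → ℤ) (m : ℤ × ℤ) : Finset (Fin 7) :=
  Finset.univ.filter fun i =>
    (rayForm i).1 * m.1 + (rayForm i).2 * m.2 + cExt c i < 0

/-- A subset of the cyclic index set `Fin 7` is a circular interval if it is empty
or of the form `{a, a+1, …, b}` with indices taken modulo 7. -/
def IsCircularInterval (S : Finset (Fin 7)) : Prop :=
  S = ∅ ∨ ∃ (a : Fin 7) (n : ℕ),
    S = (Finset.range (n + 1)).image fun j : ℕ => a + (Fin.ofNat 7 j)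

/-- `c ∈ ℤ⁵` is cohomology-free if for every `m ∈ ℤ²` and both `ε ∈ {1, -1}`,
the set `N_{εc}(m)` is a circular interval different from the whole index set. -/
def CohomologyFree (c : Fin 5 → ℤ) : Prop :=
  ∀ m : ℤ × ℤ, ∀ ε : ℤ, ε = 1 ∨ ε = -1 →
    IsCircularInterval (Nset (ε • c) m) ∧ Nset (ε • c) m ≠ Finset.univ

open Finset

def HasAtMostOneDescent (S : Finset (Fin 7)) : Prop :=
  ∀ i ∈ S, ∀ j ∈ S, i + 1 ∉ S → j + 1 ∉ S → i = j

instance (S : Finset (Fin 7)) : Decidable (HasAtMostOneDescent S) := by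
  unfold HasAtMostOneDescent; infer_instance

def arc (a : Fin 7) (n : ℕ) : Finset (Fin 7) :=
  (range (n + 1)).image fun j : ℕ => a + Fin.ofNat 7 j

lemma arc_eq_univ_of_six_le (a : Fin 7) {n : ℕ} (hn : 6 ≤ n) : arc a n = univ := by
  refine eq_univ_iff_forall.mpr fun k => mem_image.mpr ⟨(k - a).val, ?_, ?_⟩
  · have := (k - a).isLt; rw [mem_range]; omega
  · rw [Fin.ofNat_val_eq_self, add_sub_cancel]

lemma isCircularInterval_iff_exists_fin (S : Finset (Fin 7)) :
    IsCircularInterval S ↔ S = ∅ ∨ ∃ a n : Fin 7, S = arc a n := by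
  refine or_congr_right ⟨fun ⟨a, n, hS⟩ => ?_, fun ⟨a, n, hS⟩ => ⟨a, n, hS⟩⟩
  by_cases hn : n < 7
  · exact ⟨a, ⟨n, hn⟩, hS⟩
  · exact ⟨a, 6, hS.trans <| (arc_eq_univ_of_six_le a (by omega)).trans
      (arc_eq_univ_of_six_le a le_rfl).symm⟩

set_option maxRecDepth 10000 in
lemma isCircularInterval_iff_hasAtMostOneDescent (S : Finset (Fin 7)) :
    IsCircularInterval S ↔ HasAtMostOneDescent S := by
  rw [isCircularInterval_iff_exists_fin]
  revert S
  decide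

lemma mem_Nset {c : Fin 5 → ℤ} {m : ℤ × ℤ} {i : Fin 7} :
    i ∈ Nset c m ↔ (rayForm i).1 * m.1 + (rayForm i).2 * m.2 + cExt c i < 0 := by
  simp [Nset]

lemma Nset_ne_univ {c : Fin 5 → ℤ} (hc : -1 ≤ c 4) (m : ℤ × ℤ) : Nset c m ≠ univ := by
  intro h
  have h4 : (4 : Fin 7) ∈ Nset c m := h ▸ mem_univ _
  have h6 : (6 : Fin 7) ∈ Nset c m := h ▸ mem_univ _
  simp [mem_Nset, rayForm, cExt] at h4 h6
  omega

lemma cohomologyFree_iff {c : Fin 5 → ℤ} (hc : c 4 = 1 ∨ c 4 = -1) :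
    CohomologyFree c ↔ ∀ m : ℤ × ℤ, ∀ ε : ℤ, ε = 1 ∨ ε = -1 →
      HasAtMostOneDescent (Nset (ε • c) m) := by
  refine forall_congr' fun m => forall_congr' fun ε => imp_congr_right fun hε => ?_
  rw [isCircularInterval_iff_hasAtMostOneDescent, and_iff_left (Nset_ne_univ ?_ m)]
  rcases hε with rfl | rfl <;> simp <;> omega

lemma cohomologyFree_canonical : CohomologyFree ![0, 1, 2, 1, 1] := by
  rw [cohomologyFree_iff (.inl rfl)]
  rintro ⟨x, y⟩ ε hε i hi j hj hi' hj'
  rcases hε with rfl | rfl <;> fin_cases i <;> fin_cases j <;>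
    first | rfl | (simp [mem_Nset, rayForm, cExt] at hi hj hi' hj'; omega)

lemma HasAtMostOneDescent.not_mem {S : Finset (Fin 7)} (hS : HasAtMostOneDescent S)
    {i j : Fin 7} (hij : i ≠ j) (hi : i ∈ S) (hi' : i + 1 ∉ S) (hj' : j + 1 ∉ S) : j ∉ S :=
  fun hj => hij (hS i hi j hj hi' hj')

lemma eq_of_cohomologyFree {c : Fin 5 → ℤ} (hc : CohomologyFree c) (h5 : c 4 = 1)
    (h1 : c 0 = 0) : c = ![0, 1, 2, 1, 1] := by
  rw [cohomologyFree_iff (.inl h5)] at hc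
  have h53 := (hc (-1, -1) 1 (.inl rfl)).not_mem (i := 5) (j := 3) (by decide)
  have h52 := (hc (-1, -1) 1 (.inl rfl)).not_mem (i := 5) (j := 2) (by decide)
  have h51 := (hc (-1, -1) 1 (.inl rfl)).not_mem (i := 5) (j := 1) (by decide)
  have h63 := (hc (1, 1) (-1) (.inr rfl)).not_mem (i := 6) (j := 3) (by decide)
  have h62 := (hc (1, 1) (-1) (.inr rfl)).not_mem (i := 6) (j := 2) (by decide)
  have h02 := (hc (-1, 0) 1 (.inl rfl)).not_mem (i := 0) (j := 2) (by decide)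
  simp [mem_Nset, rayForm, cExt, h1, h5] at h53 h52 h51 h63 h62 h02
  ext i
  fin_cases i <;> simp <;> omega

/-- Classification of cohomology-free vectors with `c₅ = 1` and `c₁ = 0`. -/
theorem classification_c5_one_c1_zero (c : Fin 5 → ℤ) (h5 : c 4 = 1)
    (h1 : c 0 = 0) :
    CohomologyFree c ↔ c = ![0,1,2,1,1] :=
  ⟨fun hc => eq_of_cohomologyFree hc h5 h1, fun hc => hc ▸ cohomologyFree_canonical⟩
end

section
/- If c = (c_1,c_2,c_3,c_4,c_5) ∈ ℤ⁵ is cohomology-free with c_5 = 1 and c_1 ≥ 2, then c_4 = c_1 or c_4 = c_1 + 1, and moreover c_2 ≤ 2c_1 + 1 and c_3 ≤ 3c_1 + 2. -/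
/-!
If one of the bounds fails, an explicit `m` makes `N_{-c}(m)` contain two indices `p`, `r` and
miss two indices `q`, `s` with `p, q, r, s` in cyclic order, so `N_{-c}(m)` is not a circular
interval. The witnesses are `m = (c₄, 0)` for `c₁ ≤ c₄`, `m = (c₁ + 1, 1)` for `c₄ ≤ c₁ + 1`, and
`m = (c₄, c₄ - c₁)` for the bounds on `c₂` and `c₃`; at the last witness `l₆(m) = c₄ - 2c₁ < 0`
because `c₄ ≤ c₁ + 1` and `c₁ ≥ 2`.
-/

lemma mem_image_add_ofNat_range_iff {k : ℕ} [NeZero k] (a : Fin k) (n : ℕ) (x : Fin k) :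
    x ∈ (Finset.range (n + 1)).image (fun j : ℕ => a + Fin.ofNat k j) ↔ (x - a).val ≤ n := by
  simp only [Finset.mem_image, Finset.mem_range, Nat.lt_succ_iff]
  constructor
  · rintro ⟨j, hj, rfl⟩
    simpa [Fin.val_ofNat] using (Nat.mod_le j k).trans hj
  · intro hx
    exact ⟨(x - a).val, hx, by simp⟩

lemma IsCircularInterval.not_alternating {S : Finset (Fin 7)} (hS : IsCircularInterval S)
    {p q r s : Fin 7} (hqr : (q - p).val < (r - p).val) (hrs : (r - p).val < (s - p).val)
    (hp : p ∈ S) (hq : q ∉ S) (hr : r ∈ S) (hs : s ∉ S) : False := by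
  obtain rfl | ⟨a, n, rfl⟩ := hS
  · simp at hp
  · simp only [mem_image_add_ofNat_range_iff, Fin.sub_def, not_le] at hp hq hr hs hqr hrs
    omega

lemma mem_Nset_neg (c : Fin 5 → ℤ) (m : ℤ × ℤ) (i : Fin 7) :
    i ∈ Nset (-c) m ↔ (rayForm i).1 * m.1 + (rayForm i).2 * m.2 < cExt c i := by
  simp only [Nset, cExt, Finset.mem_filter, Finset.mem_univ, true_and, Pi.neg_apply]
  split <;> omega

lemma CohomologyFree.not_alternating {c : Fin 5 → ℤ} (h : CohomologyFree c) (m : ℤ × ℤ)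
    {p q r s : Fin 7} (hqr : (q - p).val < (r - p).val) (hrs : (r - p).val < (s - p).val)
    (hp : p ∈ Nset (-c) m) (hq : q ∉ Nset (-c) m) (hr : r ∈ Nset (-c) m)
    (hs : s ∉ Nset (-c) m) : False := by
  have hS := (h m (-1) (Or.inr rfl)).1
  rw [neg_one_smul] at hS
  exact hS.not_alternating hqr hrs hp hq hr hs

/-- If `c` is cohomology-free with `c₅ = 1` and `c₁ ≥ 2`, then
`c₄ ∈ {c₁, c₁ + 1}`, `c₂ ≤ 2c₁ + 1` and `c₃ ≤ 3c₁ + 2`. -/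
theorem upper_bounds_c5_one_c1_ge_two (c : Fin 5 → ℤ) (h : CohomologyFree c)
    (h5 : c 4 = 1) (h1 : 2 ≤ c 0) :
    (c 3 = c 0 ∨ c 3 = c 0 + 1) ∧ c 1 ≤ 2 * c 0 + 1 ∧ c 2 ≤ 3 * c 0 + 2 := by
  have c0_le_c3 : c 0 ≤ c 3 := by
    by_contra! hlt
    refine h.not_alternating (c 3, 0) (p := 0) (q := 3) (r := 4) (s := 6) (by decide) (by decide)
      ?_ ?_ ?_ ?_ <;> simp [mem_Nset_neg, rayForm, cExt] <;> omega
  have c3_le : c 3 ≤ c 0 + 1 := by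
    by_contra! hlt
    refine h.not_alternating (c 0 + 1, 1) (p := 3) (q := 4) (r := 6) (s := 0) (by decide)
      (by decide) ?_ ?_ ?_ ?_ <;> simp [mem_Nset_neg, rayForm, cExt] <;> omega
  have c1_le : c 1 ≤ 2 * c 0 + 1 := by
    by_contra! hlt
    refine h.not_alternating (c 3, c 3 - c 0) (p := 1) (q := 3) (r := 5) (s := 0) (by decide)
      (by decide) ?_ ?_ ?_ ?_ <;> simp [mem_Nset_neg, rayForm, cExt] <;> omega
  have c2_le : c 2 ≤ 3 * c 0 + 2 := by
    by_contra! hlt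
    refine h.not_alternating (c 3, c 3 - c 0) (p := 2) (q := 3) (r := 5) (s := 0) (by decide)
      (by decide) ?_ ?_ ?_ ?_ <;> simp [mem_Nset_neg, rayForm, cExt] <;> omega
  exact ⟨by omega, c1_le, c2_le⟩
end
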